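/- arXiv:1611.02231 — 2 statements merged into one kernel-verified Lean document; each statement's English description precedes it below -/
import Mathlib

section
/- Let G be a graph containing pairwise edge-disjoint spanning trees T₁, …, T_t, and let C be an edge cut of G with |C| = t whose removal separates G into the two disjoint connected graphs G₁ and G₂. Then each spanning tree T_j contains exactly one edge of C, and each of G₁ and G₂ contains t pairwise edge-disjoint spanning trees (namely, for each i and j, the edges of T_j inside G_i form a spanning tree of G_i). -/
/-- A finite loopless multigraph on vertex type `V` with edge type `E`:
each edge `e` is given by its two (distinct) endpoints `fst e` and `snd e`.
Multiple edges are allowed, loops are not. -/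
structure Multigraph (V : Type) (E : Type) where
  fst : E → V
  snd : E → V
  loopless : ∀ e, fst e ≠ snd e

namespace Multigraph

variable {V E : Type} (G : Multigraph V E)

/-- `u` and `v` are joined by some edge belonging to the edge set `F`. -/
def AdjOn (F : Set E) (u v : V) : Prop :=
  ∃ e ∈ F, (G.fst e = u ∧ G.snd e = v) ∨ (G.fst e = v ∧ G.snd e = u)

/-- The subgraph with vertex set `S` and edge set `F` is a connected spanning
subgraph of the induced subgraph of `G` on `S`: all edges of `F` have both
endpoints in `S`, and any two vertices of `S` are joined by a walk using
edges of `F`. -/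
def ConnectedWithin (S : Set V) (F : Set E) : Prop :=
  (∀ e ∈ F, G.fst e ∈ S ∧ G.snd e ∈ S) ∧
    ∀ u ∈ S, ∀ v ∈ S, Relation.ReflTransGen (G.AdjOn F) u v

/-- The spanning subgraph of `G` with edge set `F` is connected. -/
def ConnectedOn (F : Set E) : Prop := G.ConnectedWithin Set.univ F

/-- `G` is a connected graph. -/
def Connected : Prop := G.ConnectedOn Set.univ

/-- `F` is the edge set of a spanning tree of the induced subgraph of `G`
on `S`, i.e. a minimal edge set making `S` connected. -/
def IsSpanningTreeWithin (S : Set V) (F : Set E) : Prop :=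
  G.ConnectedWithin S F ∧ ∀ F' ⊆ F, G.ConnectedWithin S F' → F' = F

/-- `F` is the edge set of a spanning tree of `G`:
a minimal edge set making `G` connected. -/
def IsSpanningTree (F : Set E) : Prop := G.IsSpanningTreeWithin Set.univ F

/-- `G` contains `t` pairwise edge-disjoint spanning trees. -/
def HasEdgeDisjointSpanningTrees (t : ℕ) : Prop :=
  ∃ T : Fin t → Set E, (∀ i, G.IsSpanningTree (T i)) ∧
    ∀ i j, i ≠ j → Disjoint (T i) (T j)

/-- The edge cut determined by the vertex set `S`: all edges with exactly
one endpoint in `S`. -/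
def cutEdges (S : Set V) : Set E :=
  {e | (G.fst e ∈ S ∧ G.snd e ∉ S) ∨ (G.fst e ∉ S ∧ G.snd e ∈ S)}

/-- `G` is `n`-edge-connected: it is connected and every edge cut has at
least `n` edges. -/
def EdgeConnected (n : ℕ) : Prop :=
  G.Connected ∧
    ∀ S : Set V, S.Nonempty → S ≠ Set.univ → n ≤ (G.cutEdges S).ncard

/-- An orientation of `G` is a map `o : E → Bool`: `o e = true` means `e` is
directed from `fst e` to `snd e`, and `o e = false` means the reverse.
`tail o e` is the initial vertex of `e` under the orientation `o`. -/
def tail (o : E → Bool) (e : E) : V := if o e then G.fst e else G.snd e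

/-- The terminal vertex of the edge `e` under the orientation `o`. -/
def head (o : E → Bool) (e : E) : V := if o e then G.snd e else G.fst e

/-- The number of edges belonging to `F` directed away from `v` by `o`. -/
noncomputable def outDegOn (F : Set E) (o : E → Bool) (v : V) : ℕ :=
  {e ∈ F | G.tail o e = v}.ncard

/-- The out-degree of `v` under the orientation `o`. -/
noncomputable def outDeg (o : E → Bool) (v : V) : ℕ := G.outDegOn Set.univ o v

/-- The in-degree of `v` under the orientation `o`. -/
noncomputable def inDeg (o : E → Bool) (v : V) : ℕ := {e | G.head o e = v}.ncard

/-- The degree of `v` in the spanning subgraph with edge set `F`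
(there are no loops, so each edge at `v` counts once). -/
noncomputable def degOn (F : Set E) (v : V) : ℕ := {e ∈ F | G.fst e = v ∨ G.snd e = v}.ncard

/-- `o` is an `f`-orientation of `G` (modulo `k`): the out-degree of every
vertex `v` is congruent to `f v` modulo `k`. -/
def IsModOrientation (k : ℕ) (f : V → ZMod k) (o : E → Bool) : Prop :=
  ∀ v, (G.outDeg o v : ZMod k) = f v

/-- `G` is `Z_3`-connected: for every `f : V → ZMod 3` with
`|E(G)| ≡ ∑ v, f v (mod 3)`, `G` has an `f`-orientation. -/
def Z3Connected [Fintype V] [Fintype E] : Prop :=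
  ∀ f : V → ZMod 3, (Nat.card E : ZMod 3) = ∑ v, f v →
    ∃ o : E → Bool, G.IsModOrientation 3 f o

/-- `G` is a simple graph: no two distinct edges have the same endpoints
(and there are no loops, by definition of `Multigraph`). -/
def IsSimple : Prop :=
  ∀ e e' : E, s(G.fst e, G.snd e) = s(G.fst e', G.snd e') → e = e'

/-- `G` admits a decomposition of its edge set into stars with `k` edges:
a partition of `E` into parts, each consisting of `k` edges sharing a
common center vertex. -/
def HasStarDecomposition (k : ℕ) : Prop :=
  ∃ P : Set (Set E), (∀ e : E, ∃! p, p ∈ P ∧ e ∈ p) ∧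
    ∀ p ∈ P, ∃ c : V, (∀ e ∈ p, G.fst e = c ∨ G.snd e = c) ∧ p.ncard = k

end Multigraph

/-! A spanning tree meets every edge cut, so `t` edge-disjoint trees meet a cut of `t` edges in
exactly one edge each. If a tree `F` crosses the cut at the single edge `e` only, collapsing
the far side of the cut onto the near endpoint of `e` turns walks in `F` into walks inside the
near side, and conversely any connected edge set inside one side can be glued through `e` to the
part of `F` on the other side; minimality of `F` then makes its part inside each side minimal. -/

theorem Relation.ReflTransGen.exists_rel_mem_notMem {α : Type*} {r : α → α → Prop}
    {S : Set α} {u v : α} (h : Relation.ReflTransGen r u v) (hu : u ∈ S) (hv : v ∉ S) :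
    ∃ x ∈ S, ∃ y ∉ S, r x y := by
  induction h with
  | refl => exact absurd hu hv
  | @tail b c _ hbc ih =>
    by_cases hb : b ∈ S
    · exact ⟨b, hb, c, hv, hbc⟩
    · exact ih hb

namespace Multigraph

variable {V E : Type} (G : Multigraph V E)

def edgesWithin (S : Set V) (F : Set E) : Set E := {e ∈ F | G.fst e ∈ S ∧ G.snd e ∈ S}

instance (F : Set E) : Std.Symm (G.AdjOn F) :=
  ⟨fun _ _ ⟨e, he, h⟩ => ⟨e, he, h.symm⟩⟩

variable {G}

theorem AdjOn.mono {F F' : Set E} (h : F ⊆ F') {u v : V} (huv : G.AdjOn F u v) :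
    G.AdjOn F' u v :=
  let ⟨e, he, hend⟩ := huv
  ⟨e, h he, hend⟩

theorem cutEdges_compl (S : Set V) : G.cutEdges Sᶜ = G.cutEdges S := by
  ext e
  simp only [cutEdges, Set.mem_ofPred_eq, Set.mem_compl_iff, not_not]
  tauto

theorem ConnectedOn.inter_cutEdges_nonempty {F : Set E} (hF : G.ConnectedOn F) {S : Set V}
    {u v : V} (hu : u ∈ S) (hv : v ∉ S) : (F ∩ G.cutEdges S).Nonempty := by
  obtain ⟨x, hx, y, hy, e, he, hend⟩ :=
    (hF.2 u trivial v trivial).exists_rel_mem_notMem hu hv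
  refine ⟨e, he, ?_⟩
  rcases hend with ⟨rfl, rfl⟩ | ⟨rfl, rfl⟩
  · exact Or.inl ⟨hx, hy⟩
  · exact Or.inr ⟨hy, hx⟩

theorem connectedWithin_edgesWithin_of_cutEdges {F : Set E} (hF : G.ConnectedOn F) {S : Set V}
    {a : V} (ha : a ∈ S) (hcut : ∀ e ∈ F ∩ G.cutEdges S, G.fst e = a ∨ G.snd e = a) :
    G.ConnectedWithin S (G.edgesWithin S F) := by
  classical
  let φ : V → V := fun x => if x ∈ S then x else a
  have hedge : ∀ e ∈ F,
      Relation.ReflTransGen (G.AdjOn (G.edgesWithin S F)) (φ (G.fst e)) (φ (G.snd e)) := by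
    intro e he
    by_cases h₁ : G.fst e ∈ S <;> by_cases h₂ : G.snd e ∈ S
    · simpa [φ, h₁, h₂] using
        Relation.ReflTransGen.single ⟨e, ⟨he, h₁, h₂⟩, Or.inl ⟨rfl, rfl⟩⟩
    · have : G.fst e = a :=
        (hcut e ⟨he, Or.inl ⟨h₁, h₂⟩⟩).resolve_right fun h => h₂ (h ▸ ha)
      simp [φ, h₂, this, Relation.ReflTransGen.refl]
    · have : G.snd e = a :=
        (hcut e ⟨he, Or.inr ⟨h₁, h₂⟩⟩).resolve_left fun h => h₁ (h ▸ ha)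
      simp [φ, h₁, this, Relation.ReflTransGen.refl]
    · simp [φ, h₁, h₂, Relation.ReflTransGen.refl]
  refine ⟨fun e he => he.2, fun u hu v hv => ?_⟩
  have hφ := Relation.ReflTransGen.lift' φ (fun x y ⟨e, he, hend⟩ => by
    rcases hend with ⟨rfl, rfl⟩ | ⟨rfl, rfl⟩
    · exact hedge e he
    · exact Std.Symm.symm _ _ (hedge e he)) _ _ (hF.2 u trivial v trivial)
  simpa [Function.onFun, φ, hu, hv] using hφ

theorem connectedOn_union_of_connectedWithin {S : Set V} {A B : Set E}
    (hA : G.ConnectedWithin S A) (hB : G.ConnectedWithin Sᶜ B) {e : E} (he : e ∈ G.cutEdges S) :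
    G.ConnectedOn (A ∪ B ∪ {e}) := by
  let R := G.AdjOn (A ∪ B ∪ {e})
  obtain ⟨a, ha, b, hb, hab⟩ : ∃ a ∈ S, ∃ b ∉ S, R a b := by
    rcases he with ⟨h₁, h₂⟩ | ⟨h₁, h₂⟩
    · exact ⟨_, h₁, _, h₂, e, Or.inr rfl, Or.inl ⟨rfl, rfl⟩⟩
    · exact ⟨_, h₂, _, h₁, e, Or.inr rfl, Or.inr ⟨rfl, rfl⟩⟩
  have hreach : ∀ w, Relation.ReflTransGen R w a := by
    intro w
    by_cases hw : w ∈ S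
    · exact Relation.ReflTransGen.mono (fun _ _ => AdjOn.mono
        (Set.subset_union_left.trans Set.subset_union_left)) _ _ (hA.2 w hw a ha)
    · exact (Relation.ReflTransGen.mono (fun _ _ => AdjOn.mono
        (Set.subset_union_right.trans Set.subset_union_left)) _ _ (hB.2 w hw b hb)).tail
        (Std.Symm.symm _ _ hab)
  exact ⟨fun _ _ => ⟨trivial, trivial⟩,
    fun u _ v _ => (hreach u).trans (Std.Symm.symm _ _ (hreach v))⟩

theorem IsSpanningTree.isSpanningTreeWithin_edgesWithin {F : Set E} (hF : G.IsSpanningTree F)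
    {S : Set V} {e : E} (he : F ∩ G.cutEdges S = {e}) :
    G.IsSpanningTreeWithin S (G.edgesWithin S F) := by
  have heF : e ∈ F ∩ G.cutEdges S := he ▸ rfl
  have hconn (S' : Set V) (hS' : F ∩ G.cutEdges S' = {e}) :
      G.ConnectedWithin S' (G.edgesWithin S' F) := by
    obtain ⟨a, ha, hea⟩ : ∃ a ∈ S', G.fst e = a ∨ G.snd e = a := by
      rcases (hS' ▸ rfl : e ∈ F ∩ G.cutEdges S').2 with ⟨h, -⟩ | ⟨-, h⟩
      exacts [⟨_, h, Or.inl rfl⟩, ⟨_, h, Or.inr rfl⟩]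
    refine connectedWithin_edgesWithin_of_cutEdges hF.1 ha fun f hf => ?_
    rw [hS'] at hf
    exact hf ▸ hea
  refine ⟨hconn S he, fun F' hF'F hF' => ?_⟩
  have hglued : F' ∪ G.edgesWithin Sᶜ F ∪ {e} = F :=
    hF.2 _ (Set.union_subset (Set.union_subset (hF'F.trans fun f hf => hf.1) fun f hf => hf.1)
      (Set.singleton_subset_iff.2 heF.1))
      (connectedOn_union_of_connectedWithin hF' (hconn Sᶜ (by rwa [cutEdges_compl])) heF.2)
  refine hF'F.antisymm fun f hf => ?_
  rcases (hglued.symm ▸ hf.1 : f ∈ F' ∪ G.edgesWithin Sᶜ F ∪ {e}) with (hf' | hf') | rfl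
  · exact hf'
  · exact absurd hf.2.1 hf'.2.1
  · rcases heF.2 with ⟨-, h⟩ | ⟨h, -⟩
    exacts [absurd hf.2.2 h, absurd hf.2.1 h]

end Multigraph

theorem Set.ncard_inter_eq_one_of_pairwise_disjoint {α ι : Type*} [Finite ι] {A : ι → Set α}
    {C : Set α} (hA : Pairwise (Function.onFun Disjoint A)) (hAC : ∀ i, (A i ∩ C).Nonempty)
    (hC : C.ncard = Nat.card ι) (i : ι) : (A i ∩ C).ncard = 1 := by
  -- one chosen element of each `A i ∩ C` gives an injection `ι → C`, a bijection by counting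
  choose f hf using hAC
  let g : ι → C := fun j => ⟨f j, (hf j).2⟩
  have hg : g.Injective := fun j k hjk => by
    by_contra hne
    have hfjk : f j = f k := congrArg Subtype.val hjk
    exact Set.disjoint_left.1 (hA hne) (hf j).1 (hfjk ▸ (hf k).1)
  have : Nonempty ι := ⟨i⟩
  have : Finite C := Nat.finite_of_card_ne_zero <| by
    rw [Nat.card_coe_set_eq, hC]; exact Nat.card_pos.ne'
  have hg' := hg.bijective_of_nat_card_le (by rw [Nat.card_coe_set_eq, hC])
  refine Set.ncard_eq_one.2 ⟨f i, Set.eq_singleton_iff_unique_mem.2 ⟨hf i, fun x hx => ?_⟩⟩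
  obtain ⟨j, hj⟩ := hg'.2 ⟨x, hx.2⟩
  have hx' : x = f j := congrArg Subtype.val hj.symm
  obtain rfl : j = i := by
    by_contra hne
    exact Set.disjoint_left.1 (hA hne) (hf j).1 (hx' ▸ hx.1)
  exact hx'

theorem spanning_trees_split_along_minimum_cut_general
    {V E : Type} (G : Multigraph V E)
    (t : ℕ) (T : Fin t → Set E)
    (hT : ∀ j, G.IsSpanningTree (T j))
    (hTdisj : ∀ i j, i ≠ j → Disjoint (T i) (T j))
    (S : Set V) (hS : S.Nonempty) (hS' : S ≠ Set.univ)
    (C : Set E) (hC : C = G.cutEdges S) (hCcard : C.ncard = t) :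
    (∀ j, (T j ∩ C).ncard = 1) ∧
      (∀ j, G.IsSpanningTreeWithin S {e ∈ T j | G.fst e ∈ S ∧ G.snd e ∈ S} ∧
        G.IsSpanningTreeWithin Sᶜ {e ∈ T j | G.fst e ∈ Sᶜ ∧ G.snd e ∈ Sᶜ}) := by
  subst hC
  obtain ⟨u, hu⟩ := hS
  obtain ⟨v, hv⟩ := (Set.ne_univ_iff_exists_notMem S).1 hS'
  have hone : ∀ j, (T j ∩ G.cutEdges S).ncard = 1 :=
    Set.ncard_inter_eq_one_of_pairwise_disjoint hTdisj
      (fun j => Multigraph.ConnectedOn.inter_cutEdges_nonempty (hT j).1 hu hv)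
      (by rw [hCcard, Nat.card_fin])
  refine ⟨hone, fun j => ?_⟩
  obtain ⟨e, he⟩ := Set.ncard_eq_one.1 (hone j)
  exact ⟨(hT j).isSpanningTreeWithin_edgesWithin he,
    (hT j).isSpanningTreeWithin_edgesWithin (by rwa [Multigraph.cutEdges_compl])⟩

/-- let `G` contain pairwise edge-disjoint spanning trees
`T₁, …, T_t`, and let `C` be an edge cut of `G` with `|C| = t` separating `G`
into the two disjoint connected graphs `G₁` (induced on `S`) and `G₂` (induced
on `Sᶜ`). Then every tree `T j` contains exactly one edge of `C`, and for each
`i` and `j` the edges of `T j` inside `G_i` form a spanning tree of `G_i`. -/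
theorem spanning_trees_split_along_minimum_cut
    {V E : Type} [Fintype V] [Fintype E] (G : Multigraph V E)
    (t : ℕ) (T : Fin t → Set E)
    (hT : ∀ j, G.IsSpanningTree (T j))
    (hTdisj : ∀ i j, i ≠ j → Disjoint (T i) (T j))
    (S : Set V) (hS : S.Nonempty) (hS' : S ≠ Set.univ)
    (C : Set E) (hC : C = G.cutEdges S) (hCcard : C.ncard = t)
    (hG₁ : G.ConnectedWithin S {e | G.fst e ∈ S ∧ G.snd e ∈ S})
    (hG₂ : G.ConnectedWithin Sᶜ {e | G.fst e ∈ Sᶜ ∧ G.snd e ∈ Sᶜ}) :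
    (∀ j, (T j ∩ C).ncard = 1) ∧
      (∀ j, G.IsSpanningTreeWithin S {e ∈ T j | G.fst e ∈ S ∧ G.snd e ∈ S} ∧
        G.IsSpanningTreeWithin Sᶜ {e ∈ T j | G.fst e ∈ Sᶜ ∧ G.snd e ∈ Sᶜ}) :=
  spanning_trees_split_along_minimum_cut_general G t T hT hTdisj S hS hS' C hC hCcard
end

section
/- Let k be an integer with k ≥ 3, and let S_k denote the star with k edges. Suppose that every simple graph H with k pairwise edge-disjoint spanning trees and with |E(H)| divisible by k admits an edge-decomposition into copies of S_k. Then for every graph G containing k pairwise edge-disjoint spanning trees and every mapping f : V(G) → Z_k with |E(G)| ≡ Σ_{v∈V(G)} f(v) (mod k), the graph G has an f-orientation. -/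
/-!
Given `r v ≡ -f v (mod k)`, inflate `G` into a simple graph `H`. Each vertex `v` becomes a gadget:
a `K_{2k}` on vertices `(i, s)` (`i < k`, `s : Bool`) split into `k` spanning double stars, the
`i`-th with central edge `(i, false)(i, true)`, plus a vertex joined to `(i, true)` in the `i`-th
star and to `r v` further gadget vertices. Each edge `e` of `G` becomes an edge between two new
vertices, one per end, and the end at `v` is joined to every `(i, false)` of the gadget of `v`.
Then the spanning trees of `G` lift to `k` edge-disjoint spanning trees of `H`, and
`|E(H)| ≡ |E(G)| + ∑ r v ≡ 0 (mod k)`; so `H` decomposes into `k`-stars, and orienting every star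
away from its centre makes all out-degrees of `H` divisible by `k`. Summing them over the vertices
that replace `v` counts every internal edge there once, `k * (…) + r v` in all, plus the
out-degree of `v` in the induced orientation of `G`, which is therefore `≡ -r v ≡ f v`.
-/

open Finset

namespace Multigraph

variable {V E : Type} (G : Multigraph V E)

instance inst_s14 (F : Set E) : Std.Symm (G.AdjOn F) where
  symm _ _ := fun ⟨e, he, h⟩ => ⟨e, he, h.symm⟩

theorem exists_isSpanningTree_subset [Finite E] {F : Set E} (hF : G.ConnectedOn F) :
    ∃ F' ⊆ F, G.IsSpanningTree F' := by
  induction h : F.ncard using Nat.strong_induction_on generalizing F with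
  | _ n ih =>
    by_cases hmin : ∀ F' ⊆ F, G.ConnectedOn F' → F' = F
    · exact ⟨F, subset_rfl, hF, hmin⟩
    push Not at hmin
    obtain ⟨F', hF'F, hF', hne⟩ := hmin
    obtain ⟨F'', hF''F', hF''⟩ :=
      ih _ (h ▸ Set.ncard_lt_ncard (hF'F.ssubset_of_ne hne) F.toFinite) hF' rfl
    exact ⟨F'', hF''F'.trans hF'F, hF''⟩

theorem hasEdgeDisjointSpanningTrees_of_connectedOn [Finite E] {t : ℕ} (S : Fin t → Set E)
    (hS : ∀ i, G.ConnectedOn (S i)) (hdisj : ∀ i j, i ≠ j → Disjoint (S i) (S j)) :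
    G.HasEdgeDisjointSpanningTrees t := by
  choose T hTS hT using fun i => G.exists_isSpanningTree_subset (hS i)
  exact ⟨T, hT, fun i j hij => (hdisj i j hij).mono (hTS i) (hTS j)⟩

theorem exists_tail_eq (c : E → V) (hc : ∀ e, G.fst e = c e ∨ G.snd e = c e) :
    ∃ o : E → Bool, ∀ e, G.tail o e = c e := by
  classical
  refine ⟨fun e => decide (G.fst e = c e), fun e => ?_⟩
  by_cases h : G.fst e = c e
  · simp [tail, h]
  · simp [tail, h, (hc e).resolve_left h]

theorem apply_tail_eq_apply_fst {α : Type} (π : V → α) (o : E → Bool) {e : E}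
    (he : π (G.fst e) = π (G.snd e)) : π (G.tail o e) = π (G.fst e) := by
  unfold tail; split <;> simp [he]

theorem outDeg_eq_card [Fintype E] [DecidableEq V] (o : E → Bool) (v : V) :
    G.outDeg o v = #{e | G.tail o e = v} := by
  simp [outDeg, outDegOn, ← Set.ncard_coe_finset]

theorem sum_outDeg_eq_card [Fintype E] [DecidableEq V] (o : E → Bool) (s : Finset V) :
    ∑ v ∈ s, G.outDeg o v = #{e | G.tail o e ∈ s} := by
  rw [card_eq_sum_card_fiberwise (f := G.tail o) (t := s) fun e he => by simpa using he]
  refine sum_congr rfl fun v hv => ?_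
  rw [outDeg_eq_card, filter_filter]
  congr 1; ext e; simp +contextual [hv]

theorem HasStarDecomposition.exists_outDeg_eq_zero [Fintype E] {k : ℕ}
    (h : G.HasStarDecomposition k) : ∃ o : E → Bool, ∀ v, (G.outDeg o v : ZMod k) = 0 := by
  classical
  obtain ⟨P, hP, hstar⟩ := h
  choose part hpart hpart_unique using hP
  choose center hcenter hcard using fun p : P => hstar p p.2
  let star : E → P := fun e => ⟨part e, (hpart e).1⟩
  have hfiber (p : P) : #{e | star e = p} = k := by
    rw [← hcard p, ← Set.ncard_coe_finset]
    congr 1; ext e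
    simp only [coe_filter, mem_univ, true_and, Set.mem_ofPred_eq, star, Subtype.ext_iff]
    exact ⟨fun he => he ▸ (hpart e).2, fun he => (hpart_unique e p ⟨p.2, he⟩).symm⟩
  obtain ⟨o, ho⟩ := G.exists_tail_eq (fun e => center (star e))
    fun e => hcenter (star e) e (hpart e).2
  refine ⟨o, fun v => (ZMod.natCast_eq_zero_iff _ _).2 ?_⟩
  rw [outDeg_eq_card,
    card_eq_sum_card_fiberwise (f := star) (t := univ) fun _ _ => mem_coe.2 (mem_univ _)]
  refine dvd_sum fun p _ => ?_
  rw [filter_filter]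
  by_cases hp : center p = v
  · rw [← hfiber p]; refine dvd_of_eq (congrArg card (filter_congr fun e _ => ?_)).symm
    simp +contextual [ho, ← hp]
  · rw [filter_false_of_mem fun e _ ⟨he, hep⟩ => hp (hep ▸ (ho e).symm.trans he)]
    simp

variable {k : ℕ}

/-- The `i`-th double star consists of the edges `((j, s), i)` from `(i, s)` to `gadgetSnd i j s`.
For `i < j`, star `i` takes the two edges `(i, s)(j, s)` and star `j` the two crossing edges
`(j, s)(i, !s)`; `((i, false), i)` is the central edge and `((i, true), i)` goes to `none`. -/
def gadgetSnd (i j : Fin k) (s : Bool) : Option (Fin k × Bool) :=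
  if i = j ∧ s then none else some (j, s ^^ decide (j ≤ i))

theorem gadgetSnd_ne (i j : Fin k) (s : Bool) : gadgetSnd i j s ≠ some (i, s) := by
  unfold gadgetSnd; split_ifs <;> grind

@[simp]
theorem gadgetSnd_eq_none_iff {i j : Fin k} {s : Bool} : gadgetSnd i j s = none ↔ i = j ∧ s := by
  simp [gadgetSnd]

theorem eq_of_gadget_sym2_eq {i j i' j' : Fin k} {s s' : Bool}
    (h : s(some (i, s), gadgetSnd i j s) = s(some (i', s'), gadgetSnd i' j' s')) :
    i = i' ∧ j = j' ∧ s = s' := by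
  unfold gadgetSnd at h
  split_ifs at h <;>
    simp only [Sym2.eq_iff, Option.some.injEq, Prod.mk.injEq, reduceCtorEq] at h
  · grind
  · grind
  · grind
  · rcases h with ⟨⟨rfl, rfl⟩, rfl, -⟩ | ⟨⟨rfl, rfl⟩, rfl, h⟩
    · exact ⟨rfl, rfl, rfl⟩
    · -- an edge read backwards would need `decide (j ≤ i) = decide (i ≤ j)`, i.e. `i = j`
      rcases lt_trichotomy i j with h' | rfl | h'
      · simp [h'.le, h'.not_ge] at h
      · cases s' <;> simp_all
      · simp [h'.le, h'.not_ge] at h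

abbrev InflatedVertex (V E : Type) (k : ℕ) : Type := (E × Bool) ⊕ (V × Option (Fin k × Bool))

/-- Edges of `G`; edges `(x, i)` of the `i`-th lifted tree, where `x` is an end of an edge of `G`
or a gadget edge `(v, j, s)`; and the `r v` unlabelled edges at the extra vertex `(v, none)`. -/
abbrev InflatedEdge (E : Type) {V : Type} {k : ℕ} (r : V → Fin k) : Type :=
  E ⊕ (((E × Bool) ⊕ (V × Fin k × Bool)) × Fin k ⊕ (Σ v, Fin (r v)))

def endpoint (c : E × Bool) : V := if c.2 then G.fst c.1 else G.snd c.1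

variable (r : V → Fin k)

def inflateFst : InflatedEdge E r → InflatedVertex V E k
  | .inl e => .inl (e, true)
  | .inr (.inl (.inl c, _)) => .inl c
  | .inr (.inl (.inr (v, _, s), i)) => .inr (v, some (i, s))
  | .inr (.inr ⟨v, _⟩) => .inr (v, none)

def inflateSnd : InflatedEdge E r → InflatedVertex V E k
  | .inl e => .inl (e, false)
  | .inr (.inl (.inl c, i)) => .inr (G.endpoint c, some (i, false))
  | .inr (.inl (.inr (v, j, s), i)) => .inr (v, gadgetSnd i j s)
  | .inr (.inr ⟨v, j⟩) => .inr (v, some (Fin.castLE (r v).isLt.le j, false))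

def inflate : Multigraph (InflatedVertex V E k) (InflatedEdge E r) where
  fst := inflateFst r
  snd := G.inflateSnd r
  loopless := by
    rintro (e | ⟨c | ⟨v, j, s⟩, i⟩ | ⟨v, j⟩) <;>
      simp only [inflateFst, inflateSnd, ne_eq, Sum.inl.injEq, Sum.inr.injEq, Prod.mk.injEq,
        reduceCtorEq, Bool.true_eq_false, and_false, true_and, not_false_eq_true]
    exact (gadgetSnd_ne i j s).symm

theorem inflate_isSimple : (G.inflate r).IsSimple := by
  rintro (e | ⟨c | ⟨v, j, s⟩, i⟩ | ⟨v, j⟩) (e' | ⟨c' | ⟨v', j', s'⟩, i'⟩ | ⟨v', j'⟩) h <;>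
    simp only [inflate, inflateFst, inflateSnd, Sym2.eq_iff, Sum.inl.injEq, Sum.inr.injEq,
      Prod.mk.injEq, Option.some.injEq, Sigma.mk.injEq, reduceCtorEq, Bool.true_eq_false,
      Bool.false_eq_true, and_true, and_false, false_and, or_false, false_or, or_self,
      and_self] at h ⊢
  · exact h
  · exact ⟨h.1, h.2.2⟩
  · obtain rfl : v = v' := by tauto
    obtain ⟨rfl, rfl, rfl⟩ := eq_of_gadget_sym2_eq (Sym2.eq_iff.2 (by simpa using h))
    simp
  · grind [gadgetSnd_eq_none_iff]
  · grind [gadgetSnd_eq_none_iff]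
  · obtain ⟨rfl, -, h⟩ := h
    exact ⟨rfl, heq_of_eq (Fin.castLE_injective _ h)⟩

def inflateProj : InflatedVertex V E k → V
  | .inl c => G.endpoint c
  | .inr (v, _) => v

def inflateTree (T : Set E) (i : Fin k) : Set (InflatedEdge E r) :=
  {x | match x with
    | .inl e => e ∈ T
    | .inr (.inl (_, i')) => i' = i
    | .inr (.inr _) => False}

theorem disjoint_inflateTree {T T' : Set E} (hT : Disjoint T T') {i i' : Fin k} (hi : i ≠ i') :
    Disjoint (inflateTree r T i) (inflateTree r T' i') := by
  rw [Set.disjoint_left]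
  rintro (e | ⟨_, _⟩ | _) h h' <;> simp only [inflateTree, Set.mem_ofPred_eq] at h h'
  · exact Set.disjoint_left.1 hT h h'
  · exact hi (h ▸ h')

theorem reflTransGen_inflateTree_hub (T : Set E) (i : Fin k) (w : InflatedVertex V E k) :
    Relation.ReflTransGen ((G.inflate r).AdjOn (inflateTree r T i)) w
      (.inr (G.inflateProj w, some (i, false))) := by
  rcases w with c | ⟨v, x⟩
  · exact .single ⟨.inr (.inl (.inl c, i)), rfl, .inl ⟨rfl, rfl⟩⟩
  have hub (s : Bool) : Relation.ReflTransGen ((G.inflate r).AdjOn (inflateTree r T i))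
      (.inr (v, some (i, s))) (.inr (v, some (i, false))) := by
    cases s
    · exact .refl
    · exact .single ⟨.inr (.inl (.inr (v, i, false), i)), rfl,
        .inr ⟨rfl, by simp [inflate, inflateSnd, gadgetSnd]⟩⟩
  rcases x with _ | ⟨j, t⟩
  · exact .head ⟨.inr (.inl (.inr (v, i, true), i)), rfl,
      .inr ⟨rfl, by simp [inflate, inflateSnd, gadgetSnd]⟩⟩ (hub true)
  by_cases hj : j = i
  · exact hj ▸ hub t
  · exact .head ⟨.inr (.inl (.inr (v, j, t ^^ decide (j ≤ i)), i)), rfl,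
      .inr ⟨rfl, by simp [inflate, inflateSnd, gadgetSnd, Ne.symm hj]⟩⟩ (hub _)

theorem connectedOn_inflateTree {T : Set E} (hT : G.ConnectedOn T) (i : Fin k) :
    (G.inflate r).ConnectedOn (inflateTree r T i) := by
  let R := Relation.ReflTransGen ((G.inflate r).AdjOn (inflateTree r T i))
  have hub_of_mem {e : E} (he : e ∈ T) :
      R (.inr (G.fst e, some (i, false))) (.inr (G.snd e, some (i, false))) :=
    (symm (G.reflTransGen_inflateTree_hub r T i (.inl (e, true)))).trans <|
      .head ⟨.inl e, he, .inl ⟨rfl, rfl⟩⟩ (G.reflTransGen_inflateTree_hub r T i (.inl (e, false)))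
  have hlift {u v : V} (huv : Relation.ReflTransGen (G.AdjOn T) u v) :
      R (.inr (u, some (i, false))) (.inr (v, some (i, false))) := by
    refine huv.lift' (fun v => (.inr (v, some (i, false)) : InflatedVertex V E k)) ?_
    rintro _ _ ⟨e, he, ⟨rfl, rfl⟩ | ⟨rfl, rfl⟩⟩
    · exact hub_of_mem he
    · exact symm (hub_of_mem he)
  refine ⟨fun _ _ => ⟨trivial, trivial⟩, fun u _ w _ => ?_⟩
  exact (G.reflTransGen_inflateTree_hub r T i u).trans <|
    (hlift (hT.2 _ trivial _ trivial)).trans (symm (G.reflTransGen_inflateTree_hub r T i w))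

theorem HasEdgeDisjointSpanningTrees.inflate [Fintype V] [Fintype E] {G : Multigraph V E}
    (h : G.HasEdgeDisjointSpanningTrees k) : (G.inflate r).HasEdgeDisjointSpanningTrees k := by
  obtain ⟨T, hT, hdisj⟩ := h
  exact hasEdgeDisjointSpanningTrees_of_connectedOn _ (fun i => inflateTree r (T i) i)
    (fun i => G.connectedOn_inflateTree r (hT i).1 i)
    fun i j hij => disjoint_inflateTree r (hdisj i j hij) hij

theorem card_inflatedEdge [Fintype V] [Fintype E] :
    Nat.card (InflatedEdge E r) =
      Nat.card E + (2 * Nat.card E + 2 * k * Nat.card V) * k + ∑ v, (r v : ℕ) := by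
  simp only [Nat.card_eq_fintype_card, Fintype.card_sum, Fintype.card_prod, Fintype.card_bool,
    Fintype.card_fin, Fintype.card_sigma]
  ring

theorem inflateProj_tail_inl (o : InflatedEdge E r → Bool) (e : E) :
    G.inflateProj ((G.inflate r).tail o (.inl e)) = G.tail (fun e => o (.inl e)) e := by
  unfold tail; split <;> rfl

theorem inflateProj_tail_inr (o : InflatedEdge E r → Bool) (x) :
    G.inflateProj ((G.inflate r).tail o (.inr x)) = G.inflateProj ((G.inflate r).fst (.inr x)) :=
  apply_tail_eq_apply_fst _ _ _ (by rcases x with ⟨_ | _, _⟩ | _ <;> rfl)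

theorem sum_outDeg_inflate [Fintype V] [Fintype E] [DecidableEq V]
    (o : InflatedEdge E r → Bool) (v : V) :
    ∑ w with G.inflateProj w = v, ((G.inflate r).outDeg o w : ZMod k) =
      G.outDeg (fun e => o (.inl e)) v + (r v : ℕ) := by
  classical
  rw [← Nat.cast_sum, sum_outDeg_eq_card, card_filter, G.outDeg_eq_card, card_filter]
  simp only [mem_filter, mem_univ, true_and, Fintype.sum_sum_type, inflateProj_tail_inl,
    inflateProj_tail_inr]
  have hlabelled (x) (i : Fin k) : G.inflateProj ((G.inflate r).fst (.inr (.inl (x, i)))) =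
      Sum.elim G.endpoint Prod.fst x := by
    rcases x with _ | _ <;> rfl
  rw [Fintype.sum_prod_type, Fintype.sum_sigma]
  simp only [hlabelled, sum_const, card_univ, Fintype.card_fin, smul_eq_mul]
  push_cast
  have hdemand (w : V) (j : Fin (r w)) :
      G.inflateProj ((G.inflate r).fst (.inr (.inr ⟨w, j⟩))) = w := rfl
  simp [hdemand]

end Multigraph

open Multigraph in
/-- let `k ≥ 3` and suppose that every simple graph `H` with
`k` pairwise edge-disjoint spanning trees and `|E(H)|` divisible by `k` admits
an edge-decomposition into copies of the star `S_k` with `k` edges. Then every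
graph `G` containing `k` pairwise edge-disjoint spanning trees has an
`f`-orientation for every `f : V → ZMod k` with `|E(G)| ≡ ∑ v, f v (mod k)`. -/
theorem mod_orientation_of_star_decomposition_hypothesis
    (k : ℕ) (hk : 3 ≤ k)
    (hyp : ∀ (W F : Type) [Fintype W] [Fintype F] (H : Multigraph W F),
      H.IsSimple → H.HasEdgeDisjointSpanningTrees k → k ∣ Nat.card F →
        H.HasStarDecomposition k)
    {V E : Type} [Fintype V] [Fintype E] (G : Multigraph V E)
    (hG : G.HasEdgeDisjointSpanningTrees k)
    (f : V → ZMod k) (hf : (Nat.card E : ZMod k) = ∑ v, f v) :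
    ∃ o : E → Bool, G.IsModOrientation k f o := by
  classical
  have : NeZero k := ⟨by omega⟩
  let r : V → Fin k := fun v => ⟨(-f v).val, ZMod.val_lt _⟩
  have hr (v : V) : ((r v : ℕ) : ZMod k) = -f v := ZMod.natCast_zmod_val _
  have hdvd : k ∣ Nat.card (InflatedEdge E r) := by
    rw [← ZMod.natCast_eq_zero_iff, card_inflatedEdge]
    push_cast [ZMod.natCast_self, hr, hf]
    simp
  obtain ⟨o, ho⟩ :=
    (hyp _ _ (G.inflate r) (G.inflate_isSimple r) (hG.inflate r) hdvd).exists_outDeg_eq_zero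
  refine ⟨fun e => o (.inl e), fun v => ?_⟩
  have hcluster := G.sum_outDeg_inflate r o v
  simp only [ho, sum_const_zero, hr] at hcluster
  linear_combination -hcluster
end
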